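/- The number of equivalence classes of 3-variable Boolean functions under the relation f ~ h iff h(x) = f(Ax + b) + ℓ(x) for some A ∈ GL(3,F_2), b ∈ F_2^3, and affine function ℓ (degree at most 1), is exactly 3. Equivalently, the cosets of the Reed–Muller code R(1,3) fall into exactly 3 classes under AGL(3,2). -/

import Mathlib

/-!
Two quantities are constant on a class: whether `f` is affine, and the weight parity
`∑ x, f x`, which is unchanged by the bijection `x ↦ A x + b` and vanishes on `R(1,n)` for
`n ≥ 2`. They separate `0`, `x₀x₁` and `x₀x₁x₂` (`x₀x₁` is not affine because its restriction
to the plane `x₂ = 0` has odd weight). Conversely, the algebraic normal form reduces `f` modulo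
affine functions to `p x₀x₁ + q x₀x₂ + r x₁x₂ + s x₀x₁x₂`; when `s = 1` a translation removes the
quadratic terms, and when `s = 0` a nonzero quadratic part becomes `x₀x₁` after a permutation of
the variables and the substitution `(x₀ + r x₂)(x₁ + q x₂) = x₀x₁ + q x₀x₂ + r x₁x₂ + qr x₂`.
-/

/-- `R(r,n)`: the `F₂`-subspace of Boolean functions of algebraic degree at most `r`. -/
def ReedMuller (n r : ℕ) : Submodule (ZMod 2) ((Fin n → ZMod 2) → ZMod 2) :=
  Submodule.span (ZMod 2)
    {f | ∃ I : Finset (Fin n), I.card ≤ r ∧ f = fun x => ∏ i ∈ I, x i}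

open Matrix

theorem zmod_two_eq_zero_or_one (a : ZMod 2) : a = 0 ∨ a = 1 := by
  revert a; decide

section GeneralLinearGroup

variable {ι R : Type*} [Fintype ι] [DecidableEq ι] [CommRing R]

theorem mulVec_inv_mulVec_sub_add (A : GL ι R) (b x : ι → R) :
    (A : Matrix ι ι R) *ᵥ ((↑A⁻¹ : Matrix ι ι R) *ᵥ (x - b)) + b = x := by
  rw [mulVec_mulVec, ← Units.val_mul, mul_inv_cancel, Units.val_one, one_mulVec, sub_add_cancel]

def glOfMulSelfEqOne (M : Matrix ι ι R) (hM : M * M = 1) : GL ι R :=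
  ⟨M, M, hM, hM⟩

end GeneralLinearGroup

section ReedMuller

variable {m n : ℕ}

theorem mem_reedMuller_one_iff {l : (Fin n → ZMod 2) → ZMod 2} :
    l ∈ ReedMuller n 1 ↔ ∃ (c : ZMod 2) (a : Fin n → ZMod 2), l = fun x => c + a ⬝ᵥ x := by
  constructor
  · intro hl
    induction hl using Submodule.span_induction with
    | mem f hf =>
      obtain ⟨I, hI, rfl⟩ := hf
      obtain hI | hI := Nat.le_one_iff_eq_zero_or_eq_one.mp hI
      · obtain rfl := Finset.card_eq_zero.mp hI
        exact ⟨1, 0, by ext; simp⟩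
      · obtain ⟨i, rfl⟩ := Finset.card_eq_one.mp hI
        exact ⟨0, Pi.single i 1, by ext; simp⟩
    | zero => exact ⟨0, 0, by ext; simp⟩
    | add f g _ _ hf hg =>
      obtain ⟨c, a, rfl⟩ := hf
      obtain ⟨d, b, rfl⟩ := hg
      exact ⟨c + d, a + b, by ext; simp [add_dotProduct]; ring⟩
    | smul t f _ hf =>
      obtain ⟨c, a, rfl⟩ := hf
      exact ⟨t * c, t • a, by ext; simp [mul_add]⟩
  · rintro ⟨c, a, rfl⟩
    have monomial_mem (I : Finset (Fin n)) (hI : I.card ≤ 1) :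
        (fun x : Fin n → ZMod 2 => ∏ i ∈ I, x i) ∈ ReedMuller n 1 :=
      Submodule.subset_span ⟨I, hI, rfl⟩
    have h : (fun x => c + a ⬝ᵥ x) = c • (fun x : Fin n → ZMod 2 => ∏ i ∈ ∅, x i) +
        ∑ i, a i • fun x : Fin n → ZMod 2 => ∏ j ∈ {i}, x j := by
      ext x; simp [dotProduct, Finset.sum_apply]
    rw [h]
    exact add_mem (Submodule.smul_mem _ _ (monomial_mem _ (by simp)))
      (Submodule.sum_mem _ fun i _ => Submodule.smul_mem _ _ (monomial_mem _ (by simp)))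

theorem comp_mem_reedMuller_one (M : Matrix (Fin n) (Fin m) (ZMod 2)) (b : Fin n → ZMod 2)
    {l : (Fin n → ZMod 2) → ZMod 2} (hl : l ∈ ReedMuller n 1) :
    (fun x => l (M *ᵥ x + b)) ∈ ReedMuller m 1 := by
  obtain ⟨c, a, rfl⟩ := mem_reedMuller_one_iff.mp hl
  exact mem_reedMuller_one_iff.mpr
    ⟨c + a ⬝ᵥ b, a ᵥ* M, by ext x; simp [dotProduct_add, dotProduct_mulVec]; ring⟩

theorem sum_monomial_eq_zero {I : Finset (Fin n)} (hI : I.card < n) :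
    ∑ x : Fin n → ZMod 2, ∏ i ∈ I, x i = 0 := by
  obtain ⟨j, -, hj⟩ := Finset.exists_mem_notMem_of_card_lt_card (s := I) (t := .univ)
    (by rwa [Finset.card_univ, Fintype.card_fin])
  calc ∑ x : Fin n → ZMod 2, ∏ i ∈ I, x i
      = ∑ x : Fin n → ZMod 2, ∏ i, if i ∈ I then x i else 1 := by
        simp only [Finset.prod_ite_mem, Finset.univ_inter]
    _ = ∏ i, ∑ t : ZMod 2, if i ∈ I then t else 1 :=
        (Fintype.prod_sum fun i (t : ZMod 2) => if i ∈ I then t else 1).symm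
    _ = 0 := Finset.prod_eq_zero (Finset.mem_univ j)
        (by simp only [hj, if_false, Finset.sum_const, Finset.card_univ, ZMod.card]; rfl)

theorem sum_eq_zero_of_mem_reedMuller {r : ℕ} (hr : r < n) {l : (Fin n → ZMod 2) → ZMod 2}
    (hl : l ∈ ReedMuller n r) : ∑ x, l x = 0 := by
  induction hl using Submodule.span_induction with
  | mem f hf =>
    obtain ⟨I, hI, rfl⟩ := hf
    exact sum_monomial_eq_zero (hI.trans_lt hr)
  | zero => simp
  | add f g _ _ hf hg => simp [Finset.sum_add_distrib, hf, hg]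
  | smul t f _ hf => simp [← Finset.mul_sum, hf]

end ReedMuller

/-- The relation of the theorem: `h(x) = f(A x + b) + l(x)` with `A` invertible, `l` affine. -/
def AffineEquivalent (n : ℕ) (f h : (Fin n → ZMod 2) → ZMod 2) : Prop :=
  ∃ (A : GL (Fin n) (ZMod 2)) (b : Fin n → ZMod 2) (l : (Fin n → ZMod 2) → ZMod 2),
    l ∈ ReedMuller n 1 ∧ ∀ x, h x = f ((A : Matrix (Fin n) (Fin n) (ZMod 2)) *ᵥ x + b) + l x

namespace AffineEquivalent

variable {n : ℕ} {f h : (Fin n → ZMod 2) → ZMod 2}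

theorem of_forall_eq (A : GL (Fin n) (ZMod 2)) (b : Fin n → ZMod 2) (c : ZMod 2)
    (a : Fin n → ZMod 2)
    (hx : ∀ x, h x = f ((A : Matrix (Fin n) (Fin n) (ZMod 2)) *ᵥ x + b) + (c + a ⬝ᵥ x)) :
    AffineEquivalent n f h :=
  ⟨A, b, _, mem_reedMuller_one_iff.mpr ⟨c, a, rfl⟩, hx⟩

theorem mem_reedMuller_one_congr (hfh : AffineEquivalent n f h) :
    f ∈ ReedMuller n 1 ↔ h ∈ ReedMuller n 1 := by
  obtain ⟨A, b, l, hl, hx⟩ := hfh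
  set α := fun x => (A : Matrix (Fin n) (Fin n) (ZMod 2)) *ᵥ x + b
  have h_eq : h = (fun x => f (α x)) + l := funext hx
  constructor
  · intro hf
    exact h_eq ▸ add_mem (comp_mem_reedMuller_one _ b hf) hl
  · intro hh
    have hfα : (fun x => f (α x)) ∈ ReedMuller n 1 := by
      simpa [h_eq] using sub_mem hh hl
    have := comp_mem_reedMuller_one (↑A⁻¹ : Matrix (Fin n) (Fin n) (ZMod 2))
      (-((↑A⁻¹ : Matrix (Fin n) (Fin n) (ZMod 2)) *ᵥ b)) hfα
    simpa [α, ← mulVec_neg, ← mulVec_add, ← sub_eq_add_neg, mulVec_inv_mulVec_sub_add] using this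

theorem sum_eq (hn : 1 < n) (hfh : AffineEquivalent n f h) : ∑ x, f x = ∑ x, h x := by
  obtain ⟨A, b, l, hl, hx⟩ := hfh
  have hbij : Function.Bijective fun x => (A : Matrix (Fin n) (Fin n) (ZMod 2)) *ᵥ x + b :=
    Function.Surjective.bijective_of_finite fun y => ⟨_, mulVec_inv_mulVec_sub_add A b y⟩
  rw [Finset.sum_congr rfl fun x _ => hx x, Finset.sum_add_distrib,
    sum_eq_zero_of_mem_reedMuller hn hl, add_zero]
  exact (Fintype.sum_bijective _ hbij _ _ fun _ => rfl).symm

theorem mem_reedMuller_one_iff_of_mk_eq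
    (hfh : Quot.mk (AffineEquivalent n) f = Quot.mk (AffineEquivalent n) h) :
    f ∈ ReedMuller n 1 ↔ h ∈ ReedMuller n 1 :=
  (congrArg (Quot.lift (· ∈ ReedMuller n 1) fun _ _ hfg => propext hfg.mem_reedMuller_one_congr)
    hfh).to_iff

theorem sum_eq_of_mk_eq (hn : 1 < n)
    (hfh : Quot.mk (AffineEquivalent n) f = Quot.mk (AffineEquivalent n) h) :
    ∑ x, f x = ∑ x, h x :=
  congrArg (Quot.lift (fun f => ∑ x, f x) fun _ _ hfg => hfg.sum_eq hn) hfh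

end AffineEquivalent

def quadCubic (p q r s : ZMod 2) : (Fin 3 → ZMod 2) → ZMod 2 :=
  fun x => p * (x 0 * x 1) + q * (x 0 * x 2) + r * (x 1 * x 2) + s * (x 0 * x 1 * x 2)

theorem exists_affineEquivalent_quadCubic (f : (Fin 3 → ZMod 2) → ZMod 2) :
    ∃ p q r s, AffineEquivalent 3 (quadCubic p q r s) f := by
  -- Möbius inversion: the coefficient of `∏ i ∈ I, x i` is `∑ J ⊆ I, f 1_J`.
  refine ⟨f ![1,1,0] + f ![1,0,0] + f ![0,1,0] + f ![0,0,0],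
    f ![1,0,1] + f ![1,0,0] + f ![0,0,1] + f ![0,0,0],
    f ![0,1,1] + f ![0,1,0] + f ![0,0,1] + f ![0,0,0],
    f ![1,1,1] + f ![1,1,0] + f ![1,0,1] + f ![0,1,1] + f ![1,0,0] + f ![0,1,0] + f ![0,0,1]
      + f ![0,0,0],
    .of_forall_eq 1 0 (f ![0,0,0])
      ![f ![1,0,0] + f ![0,0,0], f ![0,1,0] + f ![0,0,0], f ![0,0,1] + f ![0,0,0]] fun x => ?_⟩
  obtain ⟨a, b, c, rfl⟩ : ∃ a b c, x = ![a, b, c] :=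
    ⟨x 0, x 1, x 2, by ext i; fin_cases i <;> rfl⟩
  simp only [quadCubic, dotProduct, Fin.sum_univ_three, Units.val_one, one_mulVec, add_zero]
  rcases zmod_two_eq_zero_or_one a with rfl | rfl <;>
    rcases zmod_two_eq_zero_or_one b with rfl | rfl <;>
    rcases zmod_two_eq_zero_or_one c with rfl | rfl <;>
    simp <;> ring_nf <;> reduce_mod_char

theorem affineEquivalent_cubic (p q r : ZMod 2) :
    AffineEquivalent 3 (quadCubic 0 0 0 1) (quadCubic p q r 1) :=
  .of_forall_eq 1 ![r, q, p] (r * q * p) ![q * p, r * p, r * q] (by revert p q r; decide)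

theorem affineEquivalent_quadratic (q r : ZMod 2) :
    AffineEquivalent 3 (quadCubic 1 0 0 0) (quadCubic 1 q r 0) :=
  .of_forall_eq (glOfMulSelfEqOne !![1, 0, r; 0, 1, q; 0, 0, 1] (by revert q r; decide)) 0 0
    ![0, 0, q * r] (by revert q r; decide)

theorem affineEquivalent_swap_one_two (r : ZMod 2) :
    AffineEquivalent 3 (quadCubic 1 0 r 0) (quadCubic 0 1 r 0) :=
  .of_forall_eq (glOfMulSelfEqOne !![1, 0, 0; 0, 0, 1; 0, 1, 0] (by decide)) 0 0 0
    (by revert r; decide)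

theorem affineEquivalent_swap_zero_two :
    AffineEquivalent 3 (quadCubic 1 0 0 0) (quadCubic 0 0 1 0) :=
  .of_forall_eq (glOfMulSelfEqOne !![0, 0, 1; 0, 1, 0; 1, 0, 0] (by decide)) 0 0 0 (by decide)

theorem mk_eq_or_eq_or_eq (f : (Fin 3 → ZMod 2) → ZMod 2) :
    Quot.mk (AffineEquivalent 3) f = Quot.mk _ (quadCubic 0 0 0 0) ∨
      Quot.mk (AffineEquivalent 3) f = Quot.mk _ (quadCubic 1 0 0 0) ∨
      Quot.mk (AffineEquivalent 3) f = Quot.mk _ (quadCubic 0 0 0 1) := by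
  obtain ⟨p, q, r, s, hf⟩ := exists_affineEquivalent_quadCubic f
  rw [← Quot.sound hf]
  rcases zmod_two_eq_zero_or_one s with rfl | rfl
  swap
  · exact .inr (.inr (Quot.sound (affineEquivalent_cubic p q r)).symm)
  rcases zmod_two_eq_zero_or_one p with rfl | rfl
  swap
  · exact .inr (.inl (Quot.sound (affineEquivalent_quadratic q r)).symm)
  rcases zmod_two_eq_zero_or_one q with rfl | rfl
  swap
  · exact .inr (.inl ((Quot.sound (affineEquivalent_quadratic 0 r)).trans
      (Quot.sound (affineEquivalent_swap_one_two r))).symm)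
  rcases zmod_two_eq_zero_or_one r with rfl | rfl
  · exact .inl rfl
  · exact .inr (.inl (Quot.sound affineEquivalent_swap_zero_two).symm)

theorem quadCubic_zero_mem : quadCubic 0 0 0 0 ∈ ReedMuller 3 1 :=
  mem_reedMuller_one_iff.mpr ⟨0, 0, by ext; simp [quadCubic]⟩

theorem quadCubic_x₀x₁_not_mem : quadCubic 1 0 0 0 ∉ ReedMuller 3 1 := fun h => by
  have := sum_eq_zero_of_mem_reedMuller one_lt_two
    (comp_mem_reedMuller_one !![1, 0; 0, 1; 0, 0] 0 h)
  revert this; decide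

theorem sum_quadCubic_x₀x₁ : ∑ x, quadCubic 1 0 0 0 x = 0 := by decide

theorem sum_quadCubic_x₀x₁x₂ : ∑ x, quadCubic 0 0 0 1 x = 1 := by decide

theorem quadCubic_x₀x₁x₂_not_mem : quadCubic 0 0 0 1 ∉ ReedMuller 3 1 := fun h => by
  simpa [sum_quadCubic_x₀x₁x₂] using sum_eq_zero_of_mem_reedMuller (by norm_num) h

/-- There are exactly 3 equivalence classes of 3-variable Boolean functions under
`f ~ h` iff `h(x) = f(Ax + b) + ℓ(x)` for some `A ∈ GL(3,F₂)`, `b ∈ F₂³` and affine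
`ℓ` (degree ≤ 1); equivalently, the cosets of the Reed–Muller code `R(1,3)` fall
into exactly 3 classes under `AGL(3,2)`. -/
theorem card_classes_R13 :
    Nat.card (Quot (fun f h : (Fin 3 → ZMod 2) → ZMod 2 =>
      ∃ (A : GL (Fin 3) (ZMod 2)) (b : Fin 3 → ZMod 2)
        (l : (Fin 3 → ZMod 2) → ZMod 2), l ∈ ReedMuller 3 1 ∧
          ∀ x, h x = f ((A : Matrix (Fin 3) (Fin 3) (ZMod 2)).mulVec x + b) + l x)) = 3 := by
  change Nat.card (Quot (AffineEquivalent 3)) = 3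
  rw [← Set.ncard_univ, Set.ncard_eq_three]
  refine ⟨Quot.mk _ (quadCubic 0 0 0 0), Quot.mk _ (quadCubic 1 0 0 0),
    Quot.mk _ (quadCubic 0 0 0 1), fun h => ?_, fun h => ?_, fun h => ?_, ?_⟩
  · exact quadCubic_x₀x₁_not_mem
      ((AffineEquivalent.mem_reedMuller_one_iff_of_mk_eq h).mp quadCubic_zero_mem)
  · exact quadCubic_x₀x₁x₂_not_mem
      ((AffineEquivalent.mem_reedMuller_one_iff_of_mk_eq h).mp quadCubic_zero_mem)
  · have := AffineEquivalent.sum_eq_of_mk_eq (by norm_num) h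
    rw [sum_quadCubic_x₀x₁, sum_quadCubic_x₀x₁x₂] at this
    exact zero_ne_one this
  · ext c
    induction c using Quot.ind with
    | mk f => simpa using mk_eq_or_eq_or_eq f
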